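/- arXiv:1002.2124 — 5 statements merged into one kernel-verified Lean document; each statement's English description precedes it below -/
import Mathlib

section
/- For every real α > 0, every m ∈ ℕ, and every real t ≥ 0, one has ∑_{n=0}^∞ (E_α^{(m+n)}(−t) / n!) · t^n = E_α^{(m)}(0) = m! / Γ(αm+1). -/
open MeasureTheory Complex

/-- The Mittag-Leffler function `E_α(z) = ∑ₙ zⁿ / Γ(αn+1)`. -/
noncomputable def mittagLeffler (α : ℝ) (z : ℂ) : ℂ :=
  ∑' n : ℕ, z ^ n / (Real.Gamma (α * n + 1) : ℂ)

/-!
For `α > 0` the log-convexity of `Γ` gives `Γ(x + 1 + α) ≥ x ^ α Γ(x + 1)`, so the ratio of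
consecutive coefficients `Γ(αn + 1) / Γ(α(n + 1) + 1)` tends to `0`: `E_α` is entire, and
`E_α⁽ᵐ⁾(0) = m! / Γ(αm + 1)` is read off its power series. The sum is then the Taylor expansion of
the entire function `E_α⁽ᵐ⁾` around `-t`, evaluated at `0`.
-/

open Filter Topology FormalMultilinearSeries
open scoped Nat

namespace Real

theorem rpow_mul_Gamma_add_one_le_Gamma {x a : ℝ} (hx : 0 < x) (ha : 0 < a) :
    x ^ a * Gamma (x + 1) ≤ Gamma (x + 1 + a) := by
  have hΓ : 0 < Gamma x := Gamma_pos_of_pos hx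
  have hΓ₁ : 0 < Gamma (x + 1) := Gamma_pos_of_pos (by positivity)
  -- By log-convexity, the slope of `log ∘ Gamma` on `[x + 1, x + 1 + a]` is at least its slope
  -- `log x` on `[x, x + 1]`.
  have hslope := convexOn_log_Gamma.slope_mono_adjacent (x := x) (y := x + 1) (z := x + 1 + a)
    hx (by simp only [Set.mem_Ioi]; positivity) (lt_add_one x) (by linarith)
  simp only [Function.comp_apply, Gamma_add_one hx.ne', log_mul hx.ne' hΓ.ne', add_sub_cancel_left,
    add_sub_cancel_right, div_one, le_div_iff₀ ha] at hslope
  rw [← log_le_log_iff (by positivity) (Gamma_pos_of_pos (by positivity)),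
    log_mul (by positivity) hΓ₁.ne', log_rpow hx, Gamma_add_one hx.ne', log_mul hx.ne' hΓ.ne']
  linarith

end Real

noncomputable def mittagLefflerSeries (α : ℝ) : FormalMultilinearSeries ℂ ℂ ℂ :=
  ofScalars ℂ fun n => ((Real.Gamma (α * n + 1) : ℂ))⁻¹

theorem mittagLefflerSeries_radius {α : ℝ} (hα : 0 < α) :
    (mittagLefflerSeries α).radius = ⊤ := by
  have hΓ (n : ℕ) : 0 < Real.Gamma (α * n + 1) := Real.Gamma_pos_of_pos (by positivity)
  refine ofScalars_radius_eq_top_of_tendsto _ _ (.of_forall fun n => by simp [(hΓ n).ne']) ?_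
  have hlim : Tendsto (fun n : ℕ => (α * n) ^ (-α)) atTop (𝓝 0) :=
    (tendsto_rpow_neg_atTop hα).comp <|
      (tendsto_natCast_atTop_atTop (R := ℝ)).const_mul_atTop hα
  refine squeeze_zero' (.of_forall fun n => by positivity) ?_ hlim
  filter_upwards [eventually_gt_atTop 0] with n hn
  have hbound := Real.rpow_mul_Gamma_add_one_le_Gamma (x := α * n) (by positivity) hα
  have hΓ' : 0 < Real.Gamma (α * n + 1 + α) := Real.Gamma_pos_of_pos (by positivity)
  simp only [norm_inv, Complex.norm_real, Nat.cast_succ, mul_add_one, add_right_comm _ α 1,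
    Real.norm_of_nonneg (hΓ _).le, Real.norm_of_nonneg hΓ'.le, inv_div_inv]
  rw [Real.rpow_neg (by positivity), div_le_iff₀ hΓ', ← div_eq_inv_mul, le_div_iff₀ (by positivity)]
  linarith

theorem mittagLeffler_eq_sum (α : ℝ) : mittagLeffler α = (mittagLefflerSeries α).sum := by
  ext z
  simp only [mittagLeffler, FormalMultilinearSeries.sum, mittagLefflerSeries, ofScalars_apply_eq,
    smul_eq_mul, div_eq_inv_mul]

theorem hasFPowerSeriesOnBall_mittagLeffler {α : ℝ} (hα : 0 < α) :
    HasFPowerSeriesOnBall (mittagLeffler α) (mittagLefflerSeries α) 0 ⊤ := by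
  rw [mittagLeffler_eq_sum, ← mittagLefflerSeries_radius hα]
  exact (mittagLefflerSeries α).hasFPowerSeriesOnBall (by simp [mittagLefflerSeries_radius hα])

theorem differentiable_mittagLeffler {α : ℝ} (hα : 0 < α) :
    Differentiable ℂ (mittagLeffler α) := fun z =>
  ((hasFPowerSeriesOnBall_mittagLeffler hα).analyticAt_of_mem (by simp)).differentiableAt

theorem iteratedDeriv_mittagLeffler_zero {α : ℝ} (hα : 0 < α) (m : ℕ) :
    iteratedDeriv m (mittagLeffler α) 0 = m ! / (Real.Gamma (α * m + 1) : ℂ) := by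
  rw [iteratedDeriv_eq_iteratedFDeriv,
    ← (hasFPowerSeriesOnBall_mittagLeffler hα).factorial_smul 1 m, mittagLefflerSeries,
    ofScalars_apply_eq, one_pow, smul_eq_mul, mul_one, nsmul_eq_mul, div_eq_mul_inv]

theorem iteratedDeriv_iteratedDeriv {𝕜 F : Type*} [NontriviallyNormedField 𝕜]
    [NormedAddCommGroup F] [NormedSpace 𝕜 F] (f : 𝕜 → F) (m n : ℕ) :
    iteratedDeriv n (iteratedDeriv m f) = iteratedDeriv (m + n) f := by
  simp only [iteratedDeriv_eq_iterate, add_comm m n, Function.iterate_add_apply]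

theorem Differentiable.hasSum_iteratedDeriv_add_div_factorial_mul_pow {f : ℂ → ℂ}
    (hf : Differentiable ℂ f) (m : ℕ) (z w : ℂ) :
    HasSum (fun n : ℕ => iteratedDeriv (m + n) f z / n ! * (w - z) ^ n) (iteratedDeriv m f w) := by
  refine (Complex.hasSum_taylorSeries_of_entire
    (hf.contDiff.differentiable_iteratedDeriv m (WithTop.coe_lt_top _)) z w).congr_fun fun n => ?_
  rw [iteratedDeriv_iteratedDeriv, smul_eq_mul, smul_eq_mul]
  ring

theorem mittagLeffler_shifted_taylor_sum_general (α : ℝ) (hα : 0 < α) (m : ℕ) (t : ℝ) :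
    HasSum
      (fun n : ℕ =>
        iteratedDeriv (m + n) (mittagLeffler α) (-(t : ℂ)) / (Nat.factorial n : ℂ) * (t : ℂ) ^ n)
      ((Nat.factorial m : ℂ) / (Real.Gamma (α * m + 1) : ℂ)) ∧
    iteratedDeriv m (mittagLeffler α) 0 = (Nat.factorial m : ℂ) / (Real.Gamma (α * m + 1) : ℂ) := by
  rw [← iteratedDeriv_mittagLeffler_zero hα m]
  refine ⟨?_, rfl⟩
  simpa using (differentiable_mittagLeffler hα).hasSum_iteratedDeriv_add_div_factorial_mul_pow m
    (-(t : ℂ)) 0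

/-- For every `α > 0`, `m : ℕ` and real `t ≥ 0`,
`∑ₙ (E_α⁽ᵐ⁺ⁿ⁾(−t)/n!) tⁿ = E_α⁽ᵐ⁾(0) = m! / Γ(αm+1)`. -/
theorem mittagLeffler_shifted_taylor_sum (α : ℝ) (hα : 0 < α) (m : ℕ) (t : ℝ) (ht : 0 ≤ t) :
    HasSum
      (fun n : ℕ =>
        iteratedDeriv (m + n) (mittagLeffler α) (-(t : ℂ)) / (Nat.factorial n : ℂ) * (t : ℂ) ^ n)
      ((Nat.factorial m : ℂ) / (Real.Gamma (α * m + 1) : ℂ)) ∧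
    iteratedDeriv m (mittagLeffler α) 0 = (Nat.factorial m : ℂ) / (Real.Gamma (α * m + 1) : ℂ) :=
  mittagLeffler_shifted_taylor_sum_general α hα m t
end

section
/- Let 0 < α < 1 and let ν be a probability measure on [0,∞) such that E_α(−t) = ∫_0^∞ e^{−tτ} dν(τ) for all real t ≥ 0. Then for every n ∈ ℕ the function τ ↦ τ^n is ν-integrable and the moments of ν are given by ∫_0^∞ τ^n dν(τ) = n! / Γ(αn+1). -/
/-!
Let `R_N(x) = (-1)^N (e^{-x} - ∑_{k<N} (-x)^k / k!)`. Since `R_{N+1}' = R_N` and `R_{N+1}(0) = 0`,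
induction gives `0 ≤ R_N(x) ≤ x^N / N!` on `[0, ∞)`, and `R_N(x) = x^N / N! - R_{N+1}(x)` shows
`R_N(tτ) / t^N → τ^N / N!` as `t → 0⁺`. Write `c_k = 1 / Γ(αk+1)`; these are bounded because
`Γ ≥ 1/2` on `[1, ∞)`. By strong induction on `N`, once the moments of order `< N` are known,
integrating `R_N(tτ)` against `ν` turns the representation of `E_α(-t)` into
`∫ R_N(tτ) / t^N dν(τ) = ∑_j c_{j+N} (-t)^j`, which tends to `c_N` as `t → 0⁺`.
Fatou's lemma then gives integrability of `τ^N` with `∫ τ^N / N! dν ≤ c_N`, and the bound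
`R_N(tτ) / t^N ≤ τ^N / N!` gives the reverse inequality.
-/

open MeasureTheory Complex
open Filter Topology
open scoped Nat

section BoundedCoefficients

variable {c : ℕ → ℝ} {C : ℝ}

lemma summable_mul_pow_of_abs_le (hc : ∀ k, |c k| ≤ C) {x : ℝ} (hx : |x| < 1) :
    Summable fun k => c k * x ^ k := by
  refine Summable.of_norm_bounded ((summable_geometric_of_lt_one (abs_nonneg x) hx).mul_left C)
    fun k => ?_
  rw [Real.norm_eq_abs, abs_mul, abs_pow]
  exact mul_le_mul_of_nonneg_right (hc k) (by positivity)

lemma tsum_mul_pow_sub_sum_range {x : ℝ} (hs : Summable fun k => c k * x ^ k) (N : ℕ) :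
    ∑' k, c k * x ^ k - ∑ k ∈ Finset.range N, c k * x ^ k = x ^ N * ∑' j, c (j + N) * x ^ j := by
  rw [← hs.sum_add_tsum_nat_add N, add_sub_cancel_left, ← tsum_mul_left]
  congr 1 with j
  ring

lemma tendsto_tsum_mul_pow_nhds_zero (hc : ∀ k, |c k| ≤ C) :
    Tendsto (fun x => ∑' k, c k * x ^ k) (𝓝 0) (𝓝 (c 0)) := by
  have hcont : ContinuousOn (fun x => ∑' k, c k * x ^ k) (Set.Icc (-2⁻¹) 2⁻¹) := by
    refine continuousOn_tsum (fun k => (continuous_const.mul (continuous_pow k)).continuousOn)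
      ((summable_geometric_of_lt_one (by norm_num) (by norm_num : (2⁻¹ : ℝ) < 1)).mul_left C)
      fun k x hx => ?_
    rw [Real.norm_eq_abs, abs_mul, abs_pow]
    exact mul_le_mul (hc k) (pow_le_pow_left₀ (abs_nonneg x) (abs_le.2 hx) k) (by positivity)
      ((abs_nonneg _).trans (hc k))
  have hzero : ∑' k, c k * (0 : ℝ) ^ k = c 0 := by
    rw [tsum_eq_single 0 fun k hk => by simp [hk]]
    simp
  have hnhds : Set.Icc (-2⁻¹ : ℝ) 2⁻¹ ∈ 𝓝 0 := Icc_mem_nhds (by norm_num) (by norm_num)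
  exact hzero ▸ (hcont.continuousAt hnhds).tendsto

end BoundedCoefficients

/-- `(-1) ^ N` times the remainder of the order-`N` Taylor polynomial of `x ↦ exp (-x)` at `0`;
the sign makes it nonnegative on `[0, ∞)`. -/
noncomputable def expNegRemainder (N : ℕ) (x : ℝ) : ℝ :=
  (-1) ^ N * (Real.exp (-x) - ∑ k ∈ Finset.range N, (-x) ^ k / k !)

lemma continuous_expNegRemainder (N : ℕ) : Continuous (expNegRemainder N) := by
  unfold expNegRemainder
  fun_prop

lemma expNegRemainder_zero (x : ℝ) : expNegRemainder 0 x = Real.exp (-x) := by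
  simp [expNegRemainder]

lemma expNegRemainder_succ (N : ℕ) (x : ℝ) :
    expNegRemainder (N + 1) x = (x ^ N / N !) - expNegRemainder N x := by
  have hsq : (-1 : ℝ) ^ N * (-1) ^ N = 1 := by rw [← mul_pow]; norm_num
  simp only [expNegRemainder, Finset.sum_range_succ, pow_succ, neg_pow x N]
  linear_combination x ^ N / N ! * hsq

lemma expNegRemainder_succ_zero (N : ℕ) : expNegRemainder (N + 1) 0 = 0 := by
  simp [expNegRemainder, Finset.sum_range_succ']

lemma hasDerivAt_expNegRemainder_succ (N : ℕ) (x : ℝ) :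
    HasDerivAt (expNegRemainder (N + 1)) (expNegRemainder N x) x := by
  induction N with
  | zero =>
    have h : expNegRemainder 1 = fun y => 1 - Real.exp (-y) := by
      funext y
      simp [expNegRemainder_succ, expNegRemainder_zero]
    rw [h, expNegRemainder_zero]
    simpa using ((Real.hasDerivAt_exp (-x)).comp x (hasDerivAt_neg x)).const_sub 1
  | succ N ih =>
    have h : expNegRemainder (N + 2) =
        fun y => y ^ (N + 1) / (N + 1)! - expNegRemainder (N + 1) y :=
      funext fun y => expNegRemainder_succ (N + 1) y
    rw [h, expNegRemainder_succ]
    refine (((hasDerivAt_pow (N + 1) x).div_const _).sub ih).congr_deriv ?_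
    rw [Nat.factorial_succ]
    push_cast
    field_simp

lemma expNegRemainder_nonneg (N : ℕ) {x : ℝ} (hx : 0 ≤ x) : 0 ≤ expNegRemainder N x := by
  induction N generalizing x with
  | zero => simpa [expNegRemainder_zero] using (Real.exp_pos _).le
  | succ N ih =>
    have hmono : MonotoneOn (expNegRemainder (N + 1)) (Set.Ici 0) :=
      monotoneOn_of_hasDerivWithinAt_nonneg (convex_Ici 0)
        (fun y _ => (hasDerivAt_expNegRemainder_succ N y).continuousAt.continuousWithinAt)
        (fun y _ => (hasDerivAt_expNegRemainder_succ N y).hasDerivWithinAt)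
        (fun y hy => ih (interior_subset hy))
    simpa [expNegRemainder_succ_zero] using hmono Set.self_mem_Ici hx hx

lemma expNegRemainder_le (N : ℕ) {x : ℝ} (hx : 0 ≤ x) : expNegRemainder N x ≤ x ^ N / N ! := by
  linarith [expNegRemainder_succ N x, expNegRemainder_nonneg (N + 1) hx]

lemma sub_le_expNegRemainder (N : ℕ) {x : ℝ} (hx : 0 ≤ x) :
    (x ^ N / N !) - x ^ (N + 1) / (N + 1)! ≤ expNegRemainder N x := by
  linarith [expNegRemainder_succ N x, expNegRemainder_le (N + 1) hx]

lemma expNegRemainder_mul_div_pow_le (N : ℕ) {t τ : ℝ} (ht : 0 < t) (hτ : 0 ≤ τ) :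
    expNegRemainder N (t * τ) / t ^ N ≤ τ ^ N / N ! := by
  rw [div_le_iff₀ (pow_pos ht N)]
  calc _ ≤ (t * τ) ^ N / N ! := expNegRemainder_le N (mul_nonneg ht.le hτ)
    _ = _ := by ring

lemma tendsto_expNegRemainder_mul_div_pow (N : ℕ) {τ : ℝ} (hτ : 0 ≤ τ) :
    Tendsto (fun t => expNegRemainder N (t * τ) / t ^ N) (𝓝[>] 0) (𝓝 (τ ^ N / N !)) := by
  have hlower : Tendsto (fun t => (τ ^ N / N !) - t * (τ ^ (N + 1) / (N + 1)!)) (𝓝[>] 0)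
      (𝓝 (τ ^ N / N !)) := by
    simpa using (tendsto_const_nhds.sub ((tendsto_id (x := 𝓝 (0 : ℝ))).mul_const _)).mono_left
      nhdsWithin_le_nhds
  refine tendsto_of_tendsto_of_tendsto_of_le_of_le' hlower tendsto_const_nhds ?_ ?_
  · filter_upwards [self_mem_nhdsWithin] with t (ht : 0 < t)
    rw [le_div_iff₀ (pow_pos ht N)]
    calc _ = ((t * τ) ^ N / N !) - (t * τ) ^ (N + 1) / (N + 1)! := by ring
      _ ≤ _ := sub_le_expNegRemainder N (mul_nonneg ht.le hτ)
  · filter_upwards [self_mem_nhdsWithin] with t (ht : 0 < t)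
    exact expNegRemainder_mul_div_pow_le N ht hτ

lemma integrable_and_integral_le_of_tendsto {α ι : Type*} [MeasurableSpace α] {μ : Measure α}
    {l : Filter ι} [l.IsCountablyGenerated] [l.NeBot] {F : ι → α → ℝ} {f : α → ℝ} {c : ℝ}
    (hF_meas : ∀ i, AEStronglyMeasurable (F i) μ)
    (hF : ∀ᶠ i in l, Integrable (F i) μ ∧ 0 ≤ᵐ[μ] F i) (hf : 0 ≤ᵐ[μ] f)
    (hlim : ∀ᵐ x ∂μ, Tendsto (fun i => F i x) l (𝓝 (f x)))
    (hc : Tendsto (fun i => ∫ x, F i x ∂μ) l (𝓝 c)) :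
    Integrable f μ ∧ ∫ x, f x ∂μ ≤ c := by
  have hfatou : ∫⁻ x, ENNReal.ofReal (f x) ∂μ ≤ ENNReal.ofReal c := calc
    ∫⁻ x, ENNReal.ofReal (f x) ∂μ = ∫⁻ x, liminf (fun i => ENNReal.ofReal (F i x)) l ∂μ :=
      lintegral_congr_ae <| by
        filter_upwards [hlim] with x hx using (ENNReal.tendsto_ofReal hx).liminf_eq.symm
    _ ≤ liminf (fun i => ∫⁻ x, ENNReal.ofReal (F i x) ∂μ) l :=
      lintegral_liminf_le' fun i => (hF_meas i).aemeasurable.ennreal_ofReal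
    _ = ENNReal.ofReal c := by
      refine (liminf_congr ?_).trans (ENNReal.tendsto_ofReal hc).liminf_eq
      filter_upwards [hF] with i hi
      exact (ofReal_integral_eq_lintegral_ofReal hi.1 hi.2).symm
  have hf_int : Integrable f μ :=
    ⟨aestronglyMeasurable_of_tendsto_ae l hF_meas hlim,
      (hasFiniteIntegral_iff_ofReal hf).2 (hfatou.trans_lt ENNReal.ofReal_lt_top)⟩
  have hc_nonneg : 0 ≤ c :=
    ge_of_tendsto hc (hF.mono fun i hi => integral_nonneg_of_ae hi.2)
  refine ⟨hf_int, ?_⟩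
  rwa [← ENNReal.ofReal_le_ofReal_iff hc_nonneg, ofReal_integral_eq_lintegral_ofReal hf_int hf]

section LaplaceTransform

variable {ν : Measure ℝ}

lemma neg_mul_pow_div_factorial (t τ : ℝ) (k : ℕ) :
    (-(t * τ)) ^ k / k ! = (-t) ^ k / k ! * τ ^ k := by
  ring

lemma integrable_neg_mul_pow_div_factorial {k : ℕ} (hk : Integrable (fun τ => τ ^ k) ν) (t : ℝ) :
    Integrable (fun τ => (-(t * τ)) ^ k / k !) ν := by
  simp_rw [neg_mul_pow_div_factorial]
  exact hk.const_mul _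

variable [IsFiniteMeasure ν]

lemma integrable_exp_neg_mul (hν : ∀ᵐ τ ∂ν, 0 ≤ τ) {t : ℝ} (ht : 0 ≤ t) :
    Integrable (fun τ => Real.exp (-(t * τ))) ν := by
  refine (integrable_const (1 : ℝ)).mono' (by fun_prop : Continuous _).aestronglyMeasurable ?_
  filter_upwards [hν] with τ hτ
  rw [Real.norm_of_nonneg (Real.exp_pos _).le, Real.exp_le_one_iff, neg_nonpos]
  exact mul_nonneg ht hτ

lemma integrable_expNegRemainder_mul (hν : ∀ᵐ τ ∂ν, 0 ≤ τ) {N : ℕ}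
    (hmom : ∀ k < N, Integrable (fun τ => τ ^ k) ν) {t : ℝ} (ht : 0 ≤ t) :
    Integrable (fun τ => expNegRemainder N (t * τ)) ν :=
  ((integrable_exp_neg_mul hν ht).sub (integrable_finsetSum _ fun k hk =>
    integrable_neg_mul_pow_div_factorial (hmom k (Finset.mem_range.1 hk)) t)).const_mul _

lemma integral_expNegRemainder_mul (hν : ∀ᵐ τ ∂ν, 0 ≤ τ) {c : ℕ → ℝ} {C : ℝ}
    (hc : ∀ k, |c k| ≤ C) {N : ℕ}
    (hmom : ∀ k < N, Integrable (fun τ => τ ^ k) ν ∧ ∫ τ, τ ^ k ∂ν = k ! * c k) {t : ℝ}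
    (ht₀ : 0 ≤ t) (ht₁ : t < 1) (hrep : ∑' k, c k * (-t) ^ k = ∫ τ, Real.exp (-(t * τ)) ∂ν) :
    ∫ τ, expNegRemainder N (t * τ) ∂ν = t ^ N * ∑' j, c (j + N) * (-t) ^ j := by
  have hterm_int : ∀ k ∈ Finset.range N, Integrable (fun τ => (-(t * τ)) ^ k / k !) ν :=
    fun k hk => integrable_neg_mul_pow_div_factorial (hmom k (Finset.mem_range.1 hk)).1 t
  have hterm : ∀ k ∈ Finset.range N, ∫ τ, (-(t * τ)) ^ k / k ! ∂ν = c k * (-t) ^ k := by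
    intro k hk
    simp_rw [neg_mul_pow_div_factorial]
    rw [integral_const_mul, (hmom k (Finset.mem_range.1 hk)).2]
    field_simp
  have hsum : Summable fun k => c k * (-t) ^ k :=
    summable_mul_pow_of_abs_le hc (by rwa [abs_neg, abs_of_nonneg ht₀])
  simp only [expNegRemainder]
  rw [integral_const_mul, integral_sub (integrable_exp_neg_mul hν ht₀)
    (integrable_finsetSum _ hterm_int), integral_finsetSum _ hterm_int,
    Finset.sum_congr rfl hterm, ← hrep, tsum_mul_pow_sub_sum_range hsum, ← mul_assoc, ← mul_pow]
  simp

end LaplaceTransform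

theorem integrable_and_integral_pow_of_laplace_eq_tsum {ν : Measure ℝ} [IsFiniteMeasure ν]
    (hν : ∀ᵐ τ ∂ν, 0 ≤ τ) {c : ℕ → ℝ} {C : ℝ} (hc : ∀ k, |c k| ≤ C)
    (hrep : ∀ t, 0 < t → t < 1 → ∑' k, c k * (-t) ^ k = ∫ τ, Real.exp (-(t * τ)) ∂ν) (n : ℕ) :
    Integrable (fun τ => τ ^ n) ν ∧ ∫ τ, τ ^ n ∂ν = n ! * c n := by
  induction n using Nat.strong_induction_on with
  | _ N ih =>
  set F : ℝ → ℝ → ℝ := fun t τ => expNegRemainder N (t * τ) / t ^ N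
  have hsmall : ∀ᶠ t in 𝓝[>] (0 : ℝ), 0 < t ∧ t < 1 := Ioo_mem_nhdsGT one_pos
  have hF : ∀ᶠ t in 𝓝[>] (0 : ℝ), Integrable (F t) ν ∧ 0 ≤ᵐ[ν] F t := by
    filter_upwards [hsmall] with t ht
    refine ⟨(integrable_expNegRemainder_mul hν (fun k hk => (ih k hk).1) ht.1.le).div_const _, ?_⟩
    filter_upwards [hν] with τ hτ
    exact div_nonneg (expNegRemainder_nonneg N (mul_nonneg ht.1.le hτ)) (pow_nonneg ht.1.le N)
  have hF_integral : ∀ᶠ t in 𝓝[>] (0 : ℝ), ∑' j, c (j + N) * (-t) ^ j = ∫ τ, F t τ ∂ν := by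
    filter_upwards [hsmall] with t ht
    rw [integral_div, integral_expNegRemainder_mul hν hc ih ht.1.le ht.2 (hrep t ht.1 ht.2),
      mul_div_cancel_left₀ _ (pow_ne_zero N ht.1.ne')]
  have hF_lim : Tendsto (fun t => ∫ τ, F t τ ∂ν) (𝓝[>] 0) (𝓝 (c N)) := by
    refine Tendsto.congr' hF_integral ?_
    have hneg : Tendsto (fun t : ℝ => -t) (𝓝[>] 0) (𝓝 0) := by
      simpa using (tendsto_id (x := 𝓝 (0 : ℝ))).neg.mono_left nhdsWithin_le_nhds
    simpa [Function.comp_def] using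
      (tendsto_tsum_mul_pow_nhds_zero (c := fun j => c (j + N)) fun j => hc _).comp hneg
  obtain ⟨hint, hle⟩ := integrable_and_integral_le_of_tendsto (f := fun τ => τ ^ N / N !)
    (fun t => (((continuous_expNegRemainder N).comp (continuous_const_mul t)).div_const
      _).aestronglyMeasurable)
    hF (hν.mono fun τ hτ => by positivity)
    (hν.mono fun τ hτ => tendsto_expNegRemainder_mul_div_pow N hτ) hF_lim
  have hge : c N ≤ ∫ τ, τ ^ N / N ! ∂ν := by
    refine le_of_tendsto hF_lim ?_
    filter_upwards [hF, hsmall] with t ht ht'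
    exact integral_mono_ae ht.1 hint
      (hν.mono fun τ hτ => expNegRemainder_mul_div_pow_le N ht'.1 hτ)
  rw [integral_div] at hle hge
  refine ⟨(hint.const_mul (N ! : ℝ)).congr (ae_of_all _ fun τ => by field_simp), ?_⟩
  rw [← le_antisymm hle hge]
  field_simp

lemma Real.inv_two_le_Gamma {x : ℝ} (hx : 1 ≤ x) : 2⁻¹ ≤ Real.Gamma x := by
  have one_le_Gamma : ∀ {y : ℝ}, 2 ≤ y → 1 ≤ Real.Gamma y := fun hy =>
    Real.Gamma_two ▸ Real.Gamma_strictMonoOn_Ici.monotoneOn Set.self_mem_Ici hy hy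
  rcases le_or_gt 2 x with h | h
  · linarith [one_le_Gamma h]
  · have hΓ : Real.Gamma (x + 1) = x * Real.Gamma x := Real.Gamma_add_one (by linarith)
    have := one_le_Gamma (by linarith : 2 ≤ x + 1)
    nlinarith [Real.Gamma_pos_of_pos (by linarith : 0 < x)]

lemma mittagLeffler_ofReal (α x : ℝ) :
    mittagLeffler α x = ((∑' n : ℕ, (Real.Gamma (α * n + 1))⁻¹ * x ^ n : ℝ) : ℂ) := by
  rw [mittagLeffler, Complex.ofReal_tsum]
  congr 1 with n
  push_cast
  ring

lemma integral_cexp_ofReal_mul (ν : Measure ℝ) (x : ℝ) :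
    ∫ τ, Complex.exp (x * τ) ∂ν = ((∫ τ, Real.exp (x * τ) ∂ν : ℝ) : ℂ) := by
  rw [← integral_complex_ofReal]
  push_cast
  rfl

theorem moments_of_mittagLeffler_representing_measure_general
    (α : ℝ) (hα₁ : 0 < α)
    (ν : Measure ℝ) [IsProbabilityMeasure ν] (hsupp : ν (Set.Iio 0) = 0)
    (hrep : ∀ t : ℝ, 0 ≤ t →
      mittagLeffler α (-(t : ℂ)) = ∫ τ, Complex.exp (-(t : ℂ) * (τ : ℂ)) ∂ν)
    (n : ℕ) :
    Integrable (fun τ : ℝ => τ ^ n) ν ∧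
      ∫ τ, τ ^ n ∂ν = (Nat.factorial n : ℝ) / Real.Gamma (α * n + 1) := by
  have hν : ∀ᵐ τ ∂ν, 0 ≤ τ := ae_iff.2 (by simp only [not_le]; exact hsupp)
  have hc : ∀ k : ℕ, |(Real.Gamma (α * k + 1))⁻¹| ≤ 2 := fun k => by
    have hΓ := Real.inv_two_le_Gamma (x := α * k + 1) (le_add_of_nonneg_left (by positivity))
    rw [abs_inv, abs_of_pos (by linarith), inv_le_comm₀ (by linarith) two_pos]
    exact hΓ
  have hrepR : ∀ t, 0 < t → t < 1 → ∑' k : ℕ, (Real.Gamma (α * k + 1))⁻¹ * (-t) ^ k =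
      ∫ τ, Real.exp (-(t * τ)) ∂ν := fun t ht _ => by
    have h := hrep t ht.le
    rw [← Complex.ofReal_neg, mittagLeffler_ofReal, integral_cexp_ofReal_mul,
      Complex.ofReal_inj] at h
    simpa only [neg_mul] using h
  obtain ⟨hint, hmoment⟩ := integrable_and_integral_pow_of_laplace_eq_tsum hν hc hrepR n
  exact ⟨hint, hmoment.trans (div_eq_mul_inv _ _).symm⟩

/-- Let `0 < α < 1` and let `ν` be a probability measure on `[0,∞)` (a probability measure
on `ℝ` giving no mass to `(-∞,0)`) such that `E_α(−t) = ∫ e^{−tτ} dν(τ)` for all `t ≥ 0`.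
Then for every `n` the function `τ ↦ τⁿ` is `ν`-integrable and
`∫ τⁿ dν(τ) = n! / Γ(αn+1)`. -/
theorem moments_of_mittagLeffler_representing_measure
    (α : ℝ) (hα₁ : 0 < α) (hα₂ : α < 1)
    (ν : Measure ℝ) [IsProbabilityMeasure ν] (hsupp : ν (Set.Iio 0) = 0)
    (hrep : ∀ t : ℝ, 0 ≤ t →
      mittagLeffler α (-(t : ℂ)) = ∫ τ, Complex.exp (-(t : ℂ) * (τ : ℂ)) ∂ν)
    (n : ℕ) :
    Integrable (fun τ : ℝ => τ ^ n) ν ∧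
      ∫ τ, τ ^ n ∂ν = (Nat.factorial n : ℝ) / Real.Gamma (α * n + 1) :=
  moments_of_mittagLeffler_representing_measure_general α hα₁ ν hsupp hrep n
end

section
/- Let 0 < α < 1 and let ν be a probability measure on [0,∞) whose moments satisfy ∫_0^∞ τ^n dν(τ) = n! / Γ(αn+1) for every n ∈ ℕ. Then for every complex number z with Re(z) ≥ 0, the integral representation E_α(−z) = ∫_0^∞ e^{−zτ} dν(τ) holds. -/
/-!
On `[0, ∞)` the absolute moments of `ν` are its moments `n! / Γ(αn+1)`, so
`∑ ‖z‖ⁿ / n! · ∫ |τ|ⁿ dν = ∑ ‖z‖ⁿ / Γ(αn+1)`, which is finite for every `z` because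
`Γ(αn+1) ≥ ⌊αn⌋!` grows faster than any geometric sequence. Hence the exponential series of
`e^{-zτ}` can be integrated term by term against `ν`, and its `n`-th term integrates to
`(-z)ⁿ / Γ(αn+1)`.
-/

open MeasureTheory Complex

open Nat

theorem factorial_floor_le_Gamma_add_one {x : ℝ} (hx : 1 ≤ x) :
    (⌊x⌋₊ ! : ℝ) ≤ Real.Gamma (x + 1) := by
  have hfloor : 1 ≤ ⌊x⌋₊ := Nat.one_le_floor_iff x |>.mpr hx
  rw [← Real.Gamma_nat_eq_factorial]
  refine Real.Gamma_strictMonoOn_Ici.monotoneOn ?_ ?_ ?_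
  · simp only [Set.mem_Ici]; norm_cast; omega
  · simp only [Set.mem_Ici]; linarith
  · linarith [Nat.floor_le (zero_le_one.trans hx)]

theorem summable_pow_div_Gamma_mul_add_one {α : ℝ} (hα : 0 < α) (r : ℝ) :
    Summable fun n : ℕ => r ^ n / Real.Gamma (α * n + 1) := by
  set t := (|r| + 1) ^ α⁻¹ with ht
  have ht1 : 1 ≤ t := Real.one_le_rpow (by linarith [abs_nonneg r]) (inv_pos.mpr hα).le
  -- With `m = ⌊αn⌋`: `Γ(αn+1) ≥ m!`, `(2t)ᵐ / m! ≤ e^{2t}`, and the leftover `2⁻ᵐ` is geometric in `n`.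
  have hgeom : Summable fun n : ℕ => 2 * t * Real.exp (2 * t) * ((2⁻¹ : ℝ) ^ α) ^ n :=
    (summable_geometric_of_lt_one (by positivity)
      (Real.rpow_lt_one (by norm_num) (by norm_num) hα)).mul_left _
  refine hgeom.of_norm_bounded_eventually_nat ?_
  have hlarge : ∀ᶠ n : ℕ in Filter.atTop, 1 ≤ α * n :=
    ((tendsto_natCast_atTop_atTop (R := ℝ)).const_mul_atTop hα).eventually_ge_atTop 1
  filter_upwards [hlarge] with n hn
  set m := ⌊α * n⌋₊
  have hm : α * n ≤ m + 1 := (Nat.lt_floor_add_one _).le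
  calc ‖r ^ n / Real.Gamma (α * n + 1)‖ = |r| ^ n / Real.Gamma (α * n + 1) := by
        rw [norm_div, norm_pow, Real.norm_eq_abs,
          Real.norm_of_nonneg (Real.Gamma_pos_of_pos (by linarith)).le]
    _ ≤ (|r| + 1) ^ n / m ! := by
        gcongr
        · linarith [abs_nonneg r]
        · exact factorial_floor_le_Gamma_add_one hn
    _ = t ^ (α * n) / m ! := by
        rw [ht, ← Real.rpow_natCast, ← Real.rpow_mul (by positivity), inv_mul_cancel_left₀ hα.ne']
    _ ≤ t ^ ((m : ℝ) + 1) / m ! := by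
        gcongr
    _ = 2 * t * ((2 * t) ^ m / m !) * (2⁻¹ : ℝ) ^ ((m : ℝ) + 1) := by
        rw [Real.rpow_add_one (by positivity), Real.rpow_add_one (by norm_num), Real.rpow_natCast,
          Real.rpow_natCast, mul_pow, inv_pow]
        field_simp
    _ ≤ 2 * t * Real.exp (2 * t) * (2⁻¹ : ℝ) ^ (α * n) := by
        have hexp := Real.pow_div_factorial_le_exp (x := 2 * t) (by positivity) m
        have hhalf := Real.rpow_le_rpow_of_exponent_ge (x := 2⁻¹) (by norm_num) (by norm_num) hm
        gcongr
    _ = 2 * t * Real.exp (2 * t) * ((2⁻¹ : ℝ) ^ α) ^ n := by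
        rw [Real.rpow_mul (by norm_num), Real.rpow_natCast]

theorem hasSum_integral_cexp_mul_of_summable_moments {μ : Measure ℝ} (z : ℂ)
    (hint : ∀ n : ℕ, Integrable (fun τ : ℝ => τ ^ n) μ)
    (hsum : Summable fun n : ℕ => ‖z‖ ^ n / n ! * ∫ τ, |τ| ^ n ∂μ) :
    HasSum (fun n : ℕ => z ^ n / n ! * ∫ τ, τ ^ n ∂μ) (∫ τ, cexp (z * τ) ∂μ) := by
  set F : ℕ → ℝ → ℂ := fun n τ => z ^ n / n ! * (τ ^ n : ℝ)
  have hF : ∀ n τ, F n τ = (z * τ) ^ n / n ! := fun n τ => by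
    simp only [F]; push_cast; ring
  have hF_int : ∀ n, Integrable (F n) μ := fun n => (hint n).ofReal.const_mul _
  have hF_norm : ∀ n, ∫ τ, ‖F n τ‖ ∂μ = ‖z‖ ^ n / n ! * ∫ τ, |τ| ^ n ∂μ := fun n => by
    simp only [F, norm_mul, norm_div, norm_pow, Complex.norm_natCast, Complex.norm_real,
      Real.norm_eq_abs]
    exact integral_const_mul _ _
  have hF_sum : ∀ τ : ℝ, ∑' n, F n τ = cexp (z * τ) := fun τ => by
    simp only [hF, Complex.exp_eq_exp_ℂ, NormedSpace.exp_eq_tsum_div]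
  have := hasSum_integral_of_summable_integral_norm hF_int (by simpa only [hF_norm] using hsum)
  simpa only [F, hF_sum, integral_const_mul, integral_complex_ofReal] using this

theorem mittagLeffler_laplace_representation_general
    (α : ℝ) (hα₁ : 0 < α)
    (ν : Measure ℝ) (hsupp : ν (Set.Iio 0) = 0)
    (hmom_int : ∀ n : ℕ, Integrable (fun τ : ℝ => τ ^ n) ν)
    (hmom : ∀ n : ℕ, ∫ τ, τ ^ n ∂ν = (Nat.factorial n : ℝ) / Real.Gamma (α * n + 1))
    (z : ℂ) :
    mittagLeffler α (-z) = ∫ τ, Complex.exp (-z * (τ : ℂ)) ∂ν := by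
  have hnonneg : ∀ᵐ τ ∂ν, 0 ≤ τ := ae_iff.mpr (measure_mono_null (fun _ => lt_of_not_ge) hsupp)
  have habs : ∀ n : ℕ, ∫ τ, |τ| ^ n ∂ν = n ! / Real.Gamma (α * n + 1) := fun n =>
    (integral_congr_ae (hnonneg.mono fun τ hτ => by simp only [abs_of_nonneg hτ])).trans (hmom n)
  have hsum : Summable fun n : ℕ => ‖-z‖ ^ n / n ! * ∫ τ, |τ| ^ n ∂ν := by
    convert summable_pow_div_Gamma_mul_add_one hα₁ ‖z‖ using 2 with n
    rw [habs, norm_neg]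
    field_simp
  rw [mittagLeffler, ← (hasSum_integral_cexp_mul_of_summable_moments (-z) hmom_int hsum).tsum_eq]
  refine tsum_congr fun n => ?_
  rw [hmom n, Complex.ofReal_div, Complex.ofReal_natCast,
    div_mul_div_cancel₀ (Nat.cast_ne_zero.mpr n.factorial_ne_zero)]

/-- Let `0 < α < 1` and let `ν` be a probability measure on `[0,∞)` (a probability measure
on `ℝ` giving no mass to `(-∞,0)`) whose moments satisfy `∫ τⁿ dν(τ) = n!/Γ(αn+1)` for all
`n`. Then for every `z : ℂ` with `Re z ≥ 0` one has `E_α(−z) = ∫ e^{−zτ} dν(τ)`. -/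
theorem mittagLeffler_laplace_representation
    (α : ℝ) (hα₁ : 0 < α) (hα₂ : α < 1)
    (ν : Measure ℝ) [IsProbabilityMeasure ν] (hsupp : ν (Set.Iio 0) = 0)
    (hmom_int : ∀ n : ℕ, Integrable (fun τ : ℝ => τ ^ n) ν)
    (hmom : ∀ n : ℕ, ∫ τ, τ ^ n ∂ν = (Nat.factorial n : ℝ) / Real.Gamma (α * n + 1))
    (z : ℂ) (hz : 0 ≤ z.re) :
    mittagLeffler α (-z) = ∫ τ, Complex.exp (-z * (τ : ℂ)) ∂ν :=
  mittagLeffler_laplace_representation_general α hα₁ ν hsupp hmom_int hmom z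
end

section
/- Let 0 < α < 1 and define Ψ : [0,∞) → ℝ by Ψ(σ) = E_α(−σ^α) (the real part of E_α evaluated at the nonpositive real −σ^α; the value is real). Then Ψ satisfies the Caputo fractional differential equation D^α Ψ(σ) = −Ψ(σ) for all σ > 0; explicitly, (1/Γ(1−α)) ∫_0^σ Ψ′(τ) (σ − τ)^{−α} dτ = −E_α(−σ^α), where Ψ′ denotes the derivative of Ψ. -/
open MeasureTheory Complex

/-- The survival probability `Ψ(σ) = E_α(−σ^α)` (the value is real; we take the real
part of the Mittag-Leffler function at the nonpositive real `−σ^α`). -/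
noncomputable def mlSurvival (α : ℝ) (σ : ℝ) : ℝ :=
  (mittagLeffler α (-((σ ^ α : ℝ) : ℂ))).re

/-!
On `[0, ∞)`, `Ψ(σ) = ∑ₙ (-1)ⁿ σ^{αn} / Γ(αn+1)`, and termwise differentiation gives
`Ψ'(τ) = ∑ₙ (-1)ⁿ⁺¹ τ^{a_n - 1} / Γ(a_n)` with `a_n = α(n+1)`. Against the kernel `(σ-τ)^{-α}`
each term is a Beta integral,
`∫₀^σ τ^{a-1} (σ-τ)^{b-1} / Γ(a) dτ = Γ(b) σ^{a+b-1} / Γ(a+b)`, which for `a = a_n`, `b = 1-α`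
turns the `n`-th term into `-Γ(1-α) (-1)ⁿ σ^{αn} / Γ(αn+1)`: the series of `Ψ(σ)`, times `-Γ(1-α)`.
Sum and integral may be interchanged because the integrals of the absolute values form the series
of `Γ(1-α) E_α(σ^α)`. All convergence comes from the ratio test, through the log-convexity bound
`Γ(y+1-α) y^α ≤ Γ(y+1)`, which makes `Γ(x) / Γ(x+α) → 0`.
-/

open Filter Topology

theorem Real.Gamma_add_one_sub_mul_rpow_le {α y : ℝ} (hα₀ : 0 < α) (hα₁ : α < 1) (hy : 0 < y) :
    Real.Gamma (y + 1 - α) * y ^ α ≤ Real.Gamma (y + 1) := by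
  have hΓ : 0 < Real.Gamma (y + 1) := Real.Gamma_pos_of_pos (by linarith)
  have hconv := Real.Gamma_mul_add_mul_le_rpow_Gamma_mul_rpow_Gamma hy (by linarith : 0 < y + 1)
    hα₀ (sub_pos.2 hα₁) (add_sub_cancel α 1)
  rw [show α * y + (1 - α) * (y + 1) = y + 1 - α by ring,
    show Real.Gamma y = Real.Gamma (y + 1) / y by rw [Real.Gamma_add_one hy.ne']; field_simp,
    Real.div_rpow hΓ.le hy.le] at hconv
  calc Real.Gamma (y + 1 - α) * y ^ α
      ≤ Real.Gamma (y + 1) ^ α / y ^ α * Real.Gamma (y + 1) ^ (1 - α) * y ^ α := by gcongr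
    _ = Real.Gamma (y + 1) := by
      rw [div_mul_eq_mul_div, div_mul_cancel₀ _ (Real.rpow_pos_of_pos hy α).ne',
        ← Real.rpow_add hΓ, add_sub_cancel, Real.rpow_one]

theorem Real.tendsto_Gamma_div_Gamma_add_atTop {α : ℝ} (hα₀ : 0 < α) (hα₁ : α < 1) :
    Tendsto (fun x => Real.Gamma x / Real.Gamma (x + α)) atTop (𝓝 0) := by
  have hshift : Tendsto (fun x : ℝ => x + α - 1) atTop atTop :=
    tendsto_atTop_add_const_right _ (α - 1) tendsto_id |>.congr fun x => by rw [id, add_sub_assoc]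
  refine tendsto_of_tendsto_of_tendsto_of_le_of_le' tendsto_const_nhds
    ((tendsto_rpow_neg_atTop hα₀).comp hshift) ?_ ?_
  · filter_upwards [hshift.eventually_gt_atTop 0] with x hx
    exact div_nonneg (Real.Gamma_pos_of_pos (by linarith)).le
      (Real.Gamma_pos_of_pos (by linarith)).le
  · filter_upwards [hshift.eventually_gt_atTop 0] with x hx
    have h := Real.Gamma_add_one_sub_mul_rpow_le hα₀ hα₁ hx
    rw [show x + α - 1 + 1 - α = x by ring, show x + α - 1 + 1 = x + α by ring] at h
    rw [Function.comp_apply, Real.rpow_neg hx.le, div_le_iff₀ (Real.Gamma_pos_of_pos (by linarith)),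
      ← div_eq_inv_mul, le_div_iff₀ (Real.rpow_pos_of_pos hx α)]
    exact h

theorem summable_pow_div_Gamma_mul_add {α c r : ℝ} (hα₀ : 0 < α) (hα₁ : α < 1) (hc : 0 < c)
    (hr : 0 < r) : Summable fun n : ℕ => r ^ n / Real.Gamma (α * n + c) := by
  have hΓ (n : ℕ) : 0 < Real.Gamma (α * n + c) := Real.Gamma_pos_of_pos (by positivity)
  have hlin : Tendsto (fun n : ℕ => α * n + c) atTop atTop :=
    tendsto_atTop_add_const_right _ _ <| tendsto_natCast_atTop_atTop.const_mul_atTop hα₀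
  refine summable_of_ratio_test_tendsto_lt_one zero_lt_one
    (.of_forall fun n => (div_pos (pow_pos hr n) (hΓ n)).ne') ?_
  have hratio := ((Real.tendsto_Gamma_div_Gamma_add_atTop hα₀ hα₁).comp hlin).const_mul r
  rw [mul_zero] at hratio
  refine hratio.congr fun n => ?_
  rw [Real.norm_of_nonneg (div_pos (pow_pos hr _) (hΓ _)).le,
    Real.norm_of_nonneg (div_pos (pow_pos hr _) (hΓ _)).le, Function.comp_apply]
  push_cast
  rw [show α * (n + 1) + c = α * n + c + α by ring]
  field_simp
  ring

theorem intervalIntegrable_rpow_mul_rpow_sub_of_le_half {a σ : ℝ} (ha : 0 < a) (hσ : 0 < σ)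
    (b : ℝ) : IntervalIntegrable (fun x => x ^ (a - 1) * (σ - x) ^ (b - 1)) volume 0 (σ / 2) := by
  refine (intervalIntegral.intervalIntegrable_rpow' (by linarith)).mul_continuousOn ?_
  refine ContinuousOn.rpow_const (by fun_prop) fun x hx => Or.inl ?_
  rw [Set.uIcc_of_le (by positivity)] at hx
  linarith [hx.2]

theorem intervalIntegrable_rpow_mul_rpow_sub {a b σ : ℝ} (ha : 0 < a) (hb : 0 < b)
    (hσ : 0 < σ) : IntervalIntegrable (fun x => x ^ (a - 1) * (σ - x) ^ (b - 1)) volume 0 σ := by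
  -- `x ↦ σ - x` swaps the roles of `a` and `b` and maps `[0, σ/2]` onto `[σ/2, σ]`
  have hright := (intervalIntegrable_rpow_mul_rpow_sub_of_le_half hb hσ a).comp_sub_left σ
  rw [sub_zero, sub_half] at hright
  refine (intervalIntegrable_rpow_mul_rpow_sub_of_le_half ha hσ b).trans
    (hright.symm.congr fun x _ => ?_)
  simp only [sub_sub_cancel, mul_comm]

theorem integral_rpow_mul_rpow_sub {a b σ : ℝ} (ha : 0 < a) (hb : 0 < b) (hσ : 0 < σ) :
    ∫ x in (0 : ℝ)..σ, x ^ (a - 1) * (σ - x) ^ (b - 1) =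
      Real.Gamma a * Real.Gamma b / Real.Gamma (a + b) * σ ^ (a + b - 1) := by
  have hbeta : Complex.betaIntegral a b =
      ((Real.Gamma a * Real.Gamma b / Real.Gamma (a + b) : ℝ) : ℂ) := by
    push_cast
    rw [← Complex.Gamma_ofReal, ← Complex.Gamma_ofReal, ← Complex.Gamma_ofReal, Complex.ofReal_add,
      eq_div_iff (Complex.Gamma_ne_zero_of_re_pos (by simpa using add_pos ha hb)), mul_comm,
      Complex.Gamma_mul_Gamma_eq_betaIntegral (by simpa using ha) (by simpa using hb)]
  apply Complex.ofReal_injective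
  rw [← intervalIntegral.integral_ofReal]
  have hcpow : ∀ x ∈ Set.uIcc 0 σ, (((x ^ (a - 1) * (σ - x) ^ (b - 1) : ℝ)) : ℂ) =
      (x : ℂ) ^ ((a : ℂ) - 1) * ((σ : ℂ) - x) ^ ((b : ℂ) - 1) := by
    intro x hx
    rw [Set.uIcc_of_le hσ.le] at hx
    rw [Complex.ofReal_mul, Complex.ofReal_cpow hx.1, Complex.ofReal_cpow (sub_nonneg.2 hx.2)]
    push_cast
    ring
  rw [intervalIntegral.integral_congr hcpow, Complex.betaIntegral_scaled _ _ hσ, hbeta,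
    mul_comm, Complex.ofReal_mul, Complex.ofReal_cpow hσ.le]
  push_cast
  rfl

theorem integral_rpow_div_Gamma_mul_rpow_sub {a b σ : ℝ} (ha : 0 < a) (hb : 0 < b)
    (hσ : 0 < σ) :
    ∫ x in (0 : ℝ)..σ, x ^ (a - 1) / Real.Gamma a * (σ - x) ^ (b - 1) =
      Real.Gamma b * (σ ^ (a + b - 1) / Real.Gamma (a + b)) := by
  simp_rw [div_mul_eq_mul_div, intervalIntegral.integral_div, integral_rpow_mul_rpow_sub ha hb hσ]
  field_simp [(Real.Gamma_pos_of_pos ha).ne']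

theorem integral_tsum_rpow_div_Gamma_mul_rpow_sub {a c : ℕ → ℝ} {b σ : ℝ} (ha : ∀ n, 0 < a n)
    (hb : 0 < b) (hσ : 0 < σ)
    (hc : Summable fun n => |c n| * (σ ^ (a n + b - 1) / Real.Gamma (a n + b))) :
    ∫ x in (0 : ℝ)..σ, (∑' n, c n * (x ^ (a n - 1) / Real.Gamma (a n))) * (σ - x) ^ (b - 1) =
      Real.Gamma b * ∑' n, c n * (σ ^ (a n + b - 1) / Real.Gamma (a n + b)) := by
  set F : ℕ → ℝ → ℝ := fun n x => c n * (x ^ (a n - 1) / Real.Gamma (a n) * (σ - x) ^ (b - 1))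
  have hF_int (n : ℕ) : IntegrableOn (F n) (Set.Ioc 0 σ) := by
    refine (intervalIntegrable_iff_integrableOn_Ioc_of_le hσ.le).1 ?_
    refine ((intervalIntegrable_rpow_mul_rpow_sub (ha n) hb hσ).const_mul
      (c n / Real.Gamma (a n))).congr fun x _ => ?_
    simp only [F]
    ring
  have hF_norm (n : ℕ) : ∫ x in Set.Ioc 0 σ, ‖F n x‖ =
      Real.Gamma b * (|c n| * (σ ^ (a n + b - 1) / Real.Gamma (a n + b))) := by
    have hnonneg : ∀ x ∈ Set.Ioc 0 σ, 0 ≤ x ^ (a n - 1) / Real.Gamma (a n) * (σ - x) ^ (b - 1) :=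
      fun x hx => mul_nonneg (div_nonneg (Real.rpow_nonneg hx.1.le _)
        (Real.Gamma_pos_of_pos (ha n)).le) (Real.rpow_nonneg (sub_nonneg.2 hx.2) _)
    rw [setIntegral_congr_fun measurableSet_Ioc fun x hx => by
        rw [norm_mul, Real.norm_of_nonneg (hnonneg x hx), Real.norm_eq_abs],
      integral_const_mul, ← intervalIntegral.integral_of_le hσ.le,
      integral_rpow_div_Gamma_mul_rpow_sub (ha n) hb hσ]
    ring
  have hF_integral (n : ℕ) : ∫ x in Set.Ioc 0 σ, F n x =
      Real.Gamma b * (c n * (σ ^ (a n + b - 1) / Real.Gamma (a n + b))) := by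
    rw [← intervalIntegral.integral_of_le hσ.le, intervalIntegral.integral_const_mul,
      integral_rpow_div_Gamma_mul_rpow_sub (ha n) hb hσ]
    ring
  rw [intervalIntegral.integral_of_le hσ.le, ← tsum_mul_left]
  simp_rw [← hF_integral]
  rw [integral_tsum_of_summable_integral_norm hF_int (by simpa only [hF_norm] using hc.mul_left _)]
  refine setIntegral_congr_fun measurableSet_Ioc fun x _ => ?_
  rw [← tsum_mul_right]
  simp only [F, mul_assoc]

theorem hasDerivAt_rpow_div_Gamma_add_one {a x : ℝ} (ha : 0 < a) (hx : 0 < x) :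
    HasDerivAt (fun y => y ^ a / Real.Gamma (a + 1)) (x ^ (a - 1) / Real.Gamma a) x := by
  refine ((Real.hasDerivAt_rpow_const (Or.inl hx.ne')).div_const _).congr_deriv ?_
  rw [Real.Gamma_add_one ha.ne']
  field_simp [(Real.Gamma_pos_of_pos ha).ne']

theorem mlSurvival_eq_tsum (α : ℝ) {σ : ℝ} (hσ : 0 ≤ σ) :
    mlSurvival α σ = ∑' n : ℕ, (-1) ^ n * (σ ^ (α * n) / Real.Gamma (α * n + 1)) := by
  rw [mlSurvival, mittagLeffler, ← Complex.ofReal_re (∑' n : ℕ, _), Complex.ofReal_tsum]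
  congr 1
  refine tsum_congr fun n => ?_
  rw [Real.rpow_mul hσ, Real.rpow_natCast]
  push_cast
  ring

theorem summable_mlSurvival_series {α σ : ℝ} (hα₀ : 0 < α) (hα₁ : α < 1) (hσ : 0 < σ) :
    Summable fun n : ℕ => (-1) ^ n * (σ ^ (α * n) / Real.Gamma (α * n + 1)) := by
  refine Summable.of_norm ((summable_pow_div_Gamma_mul_add hα₀ hα₁ one_pos
    (Real.rpow_pos_of_pos hσ α)).congr fun n => ?_)
  rw [norm_mul, norm_pow, norm_neg, norm_one, one_pow, one_mul, Real.norm_of_nonneg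
    (div_nonneg (Real.rpow_nonneg hσ.le _) (Real.Gamma_pos_of_pos (by positivity)).le),
    Real.rpow_mul hσ.le, Real.rpow_natCast]

theorem mlSurvival_eq_one_add_tsum {α σ : ℝ} (hα₀ : 0 < α) (hα₁ : α < 1) (hσ : 0 < σ) :
    mlSurvival α σ =
      1 + ∑' n : ℕ, (-1) ^ (n + 1) * (σ ^ (α * (n + 1)) / Real.Gamma (α * (n + 1) + 1)) := by
  rw [mlSurvival_eq_tsum α hσ.le, (summable_mlSurvival_series hα₀ hα₁ hσ).tsum_eq_zero_add]
  simp

theorem hasDerivAt_mlSurvival {α τ : ℝ} (hα₀ : 0 < α) (hα₁ : α < 1) (hτ : 0 < τ) :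
    HasDerivAt (mlSurvival α)
      (∑' n : ℕ, (-1) ^ (n + 1) * (τ ^ (α * (n + 1) - 1) / Real.Gamma (α * (n + 1)))) τ := by
  set t := Set.Ioo (τ / 2) (2 * τ)
  have hτt : τ ∈ t := ⟨by linarith, by linarith⟩
  have hterm (n : ℕ) (y : ℝ) (hy : y ∈ t) : HasDerivAt
      (fun x => (-1) ^ (n + 1) * (x ^ (α * (n + 1)) / Real.Gamma (α * (n + 1) + 1)))
      ((-1) ^ (n + 1) * (y ^ (α * (n + 1) - 1) / Real.Gamma (α * (n + 1)))) y :=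
    (hasDerivAt_rpow_div_Gamma_add_one (by positivity) (by linarith [hy.1])).const_mul _
  have hbound (n : ℕ) (y : ℝ) (hy : y ∈ t) :
      ‖(-1) ^ (n + 1) * (y ^ (α * (n + 1) - 1) / Real.Gamma (α * (n + 1)))‖ ≤
        (τ / 2) ^ (α - 1) * (((2 * τ) ^ α) ^ n / Real.Gamma (α * n + α)) := by
    have hy₀ : 0 < y := by linarith [hy.1]
    -- `y ^ (α (n+1) - 1) = y ^ (α - 1) * y ^ (α n)`, and the first factor decreases in `y`
    have hpow : y ^ (α * n + α - 1) ≤ (τ / 2) ^ (α - 1) * ((2 * τ) ^ α) ^ n := by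
      rw [show α * n + α - 1 = (α - 1) + α * n by ring, Real.rpow_add hy₀, ← Real.rpow_natCast,
        ← Real.rpow_mul (by positivity)]
      exact mul_le_mul (Real.rpow_le_rpow_of_nonpos (by positivity) hy.1.le (by linarith))
        (Real.rpow_le_rpow hy₀.le hy.2.le (by positivity)) (by positivity) (by positivity)
    calc ‖(-1) ^ (n + 1) * (y ^ (α * (n + 1) - 1) / Real.Gamma (α * (n + 1)))‖
        = y ^ (α * n + α - 1) / Real.Gamma (α * n + α) := by
          rw [norm_mul, norm_pow, norm_neg, norm_one, one_pow, one_mul, mul_add_one,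
            Real.norm_of_nonneg (div_nonneg (Real.rpow_nonneg hy₀.le _)
              (Real.Gamma_pos_of_pos (by positivity)).le)]
      _ ≤ (τ / 2) ^ (α - 1) * ((2 * τ) ^ α) ^ n / Real.Gamma (α * n + α) := by
          gcongr
      _ = _ := mul_div_assoc ..
  have hsum : Summable fun n : ℕ =>
      (τ / 2) ^ (α - 1) * (((2 * τ) ^ α) ^ n / Real.Gamma (α * n + α)) :=
    (summable_pow_div_Gamma_mul_add hα₀ hα₁ hα₀ (by positivity)).mul_left _
  have hsum₀ : Summable fun n : ℕ =>
      (-1) ^ (n + 1) * (τ ^ (α * (n + 1)) / Real.Gamma (α * (n + 1) + 1)) := by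
    exact_mod_cast (summable_nat_add_iff 1).2 (summable_mlSurvival_series hα₀ hα₁ hτ)
  have hseries := hasDerivAt_tsum_of_isPreconnected hsum isOpen_Ioo isPreconnected_Ioo hterm hbound
    hτt hsum₀ hτt
  refine (hseries.const_add 1).congr_of_eventuallyEq ?_
  filter_upwards [Ioi_mem_nhds hτ] with x hx using mlSurvival_eq_one_add_tsum hα₀ hα₁ hx

/-- For `0 < α < 1`, the function `Ψ(σ) = E_α(−σ^α)` satisfies the Caputo fractional
differential equation `D^α Ψ(σ) = −Ψ(σ)` for all `σ > 0`; explicitly,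
`(1/Γ(1−α)) ∫₀^σ Ψ'(τ) (σ−τ)^{−α} dτ = −E_α(−σ^α)`. -/
theorem mittagLeffler_caputo_equation (α : ℝ) (hα₁ : 0 < α) (hα₂ : α < 1)
    (σ : ℝ) (hσ : 0 < σ) :
    (1 / Real.Gamma (1 - α)) *
        ∫ τ in (0 : ℝ)..σ, deriv (mlSurvival α) τ * (σ - τ) ^ (-α) =
      -mlSurvival α σ := by
  have hexp (n : ℕ) : α * (n + 1) + (1 - α) - 1 = α * n := by ring
  have hΓarg (n : ℕ) : α * (n + 1) + (1 - α) = α * n + 1 := by ring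
  have hderiv : ∀ᵐ τ, τ ∈ Set.uIoc 0 σ → deriv (mlSurvival α) τ * (σ - τ) ^ (-α) =
      (∑' n : ℕ, (-1) ^ (n + 1) * (τ ^ (α * (n + 1) - 1) / Real.Gamma (α * (n + 1)))) *
        (σ - τ) ^ ((1 - α) - 1) := .of_forall fun τ hτ => by
    rw [(hasDerivAt_mlSurvival hα₁ hα₂ (Set.uIoc_of_le hσ.le ▸ hτ).1).deriv, sub_sub_cancel_left]
  have hsum : Summable fun n : ℕ => |(-1 : ℝ) ^ (n + 1)| *
      (σ ^ (α * (n + 1) + (1 - α) - 1) / Real.Gamma (α * (n + 1) + (1 - α))) := by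
    simpa [hexp, hΓarg, Real.rpow_mul hσ.le] using
      summable_pow_div_Gamma_mul_add hα₁ hα₂ one_pos (Real.rpow_pos_of_pos hσ α)
  rw [intervalIntegral.integral_congr_ae hderiv, integral_tsum_rpow_div_Gamma_mul_rpow_sub
    (fun n => by positivity) (by linarith) hσ hsum, mlSurvival_eq_tsum α hσ.le,
    ← mul_assoc, one_div_mul_cancel (Real.Gamma_pos_of_pos (by linarith)).ne', one_mul,
    ← tsum_neg]
  simp only [hexp]
  simp only [hΓarg, pow_succ, mul_neg_one, neg_mul]
end

section
/- Let (M, 𝓑) be a measurable space with a σ-finite measure μ, let p ≥ 1 be real, and let f : M → ℂ be measurable with ∫_M |f(x)|^p dμ(x) < ∞. Define the coherent state e_λ(f) : Γ₀ → ℂ by e_λ(f)(n, x) := ∏_{k=1}^n f(x_k) (with empty product 1 for n = 0). Then e_λ(f) ∈ L^p(λ_μ) and ∫_{Γ₀} |e_λ(f)|^p dλ_μ = exp( ∫_M |f(x)|^p dμ(x) ), i.e., ‖e_λ(f)‖_{L^p(λ_μ)}^p = exp(‖f‖_{L^p(μ)}^p). -/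
open MeasureTheory Complex
open scoped ENNReal

/-- The space of finite configurations, modeled as `Γ₀ := Σ (n : ℕ), (Fin n → M)`. -/
abbrev FinConf (M : Type*) := Σ n : ℕ, (Fin n → M)

/-- The Lebesgue–Poisson measure `λ_μ := ∑ₙ (1/n!) · ιₙ∗(μ^{⊗n})` on `Γ₀`. -/
noncomputable def lebesguePoisson {M : Type*} [MeasurableSpace M] (μ : Measure M)
    [SigmaFinite μ] : Measure (FinConf M) :=
  Measure.sum fun n : ℕ =>
    ((Nat.factorial n : ℝ≥0∞))⁻¹ • (Measure.pi fun _ : Fin n => μ).map (Sigma.mk n)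

/-- The (Lebesgue–Poisson) coherent state `e_λ(f)(n,x) := ∏ₖ f(xₖ)`. -/
noncomputable def coherentState {M : Type*} (f : M → ℂ) : FinConf M → ℂ :=
  fun p => ∏ k : Fin p.1, f (p.2 k)

/-!
On the `n`-particle component, `|e_λ(f)|^p` is the product `∏ₖ |f(xₖ)|^p`, so by Tonelli its
`μ^{⊗n}`-integral is `(∫ |f|^p dμ)^n`. Summing these with the weights `1/n!` of `λ_μ` gives the
exponential series of `∫ |f|^p dμ`. In particular `|e_λ(f)|^p` is integrable, which is membership
in `L^p`.
-/

open Nat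

section Sigma

variable {α : Type*} {β : α → Type*} [∀ a, MeasurableSpace (β a)]

theorem measurable_sigmaMk (a : α) : Measurable (Sigma.mk a : β a → Σ a, β a) :=
  fun _ hs => MeasurableSpace.measurableSet_iInf.mp hs a

theorem measurable_sigma_iff {γ : Type*} [MeasurableSpace γ] {g : (Σ a, β a) → γ} :
    Measurable g ↔ ∀ a, Measurable fun x : β a => g ⟨a, x⟩ :=
  ⟨fun hg a => hg.comp (measurable_sigmaMk a),
    fun h _ hs => MeasurableSpace.measurableSet_iInf.mpr fun a => h a hs⟩

end Sigma

theorem lintegral_fin_nat_prod_eq_prod {n : ℕ} {E : Type*} [MeasurableSpace E]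
    {μ : Fin n → Measure E} [∀ i, SigmaFinite (μ i)] {f : Fin n → E → ℝ≥0∞}
    (hf : ∀ i, Measurable (f i)) :
    ∫⁻ x : Fin n → E, ∏ i, f i (x i) ∂(Measure.pi μ) = ∏ i, ∫⁻ x, f i x ∂(μ i) := by
  induction n with
  | zero => simp
  | succ n ih =>
    have h_tail : Measurable fun y : Fin n → E => ∏ i, f i.succ (y i) :=
      Finset.measurable_prod _ fun i _ => (hf i.succ).comp (measurable_pi_apply i)
    calc
      _ = ∫⁻ x : E × (Fin n → E), f 0 x.1 * ∏ i : Fin n, f i.succ (x.2 i)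
            ∂((μ 0).prod (Measure.pi fun i => μ i.succ)) := by
        rw [← ((measurePreserving_piFinSuccAbove μ 0).symm).lintegral_comp_emb
          (MeasurableEquiv.measurableEmbedding _)]
        simp_rw [MeasurableEquiv.piFinSuccAbove_symm_apply, Fin.insertNthEquiv,
          Fin.prod_univ_succ, Fin.insertNth_zero, Equiv.coe_fn_mk, Fin.cons_succ,
          Fin.zero_succAbove, cast_eq, Fin.cons_zero]
      _ = (∫⁻ x, f 0 x ∂μ 0) * ∏ i : Fin n, ∫⁻ x, f i.succ x ∂(μ i.succ) := by
        rw [lintegral_prod_mul (hf 0).aemeasurable h_tail.aemeasurable, ih fun i => hf i.succ]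
      _ = ∏ i, ∫⁻ x, f i x ∂(μ i) := (Fin.prod_univ_succ fun i => ∫⁻ x, f i x ∂(μ i)).symm

theorem ENNReal.tsum_ofReal_pow_div_factorial {r : ℝ} (hr : 0 ≤ r) :
    ∑' n, ENNReal.ofReal r ^ n / n ! = ENNReal.ofReal (Real.exp r) := by
  rw [Real.exp_eq_exp_ℝ, NormedSpace.exp_eq_tsum_div,
    ENNReal.ofReal_tsum_of_nonneg (fun n => by positivity) (Real.summable_pow_div_factorial r)]
  refine tsum_congr fun n => ?_
  rw [ENNReal.ofReal_div_of_pos (by positivity), ENNReal.ofReal_pow hr, ENNReal.ofReal_natCast]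

theorem memLp_ofReal_of_integrable_norm_rpow {α E : Type*} [MeasurableSpace α]
    [NormedAddCommGroup E] {μ : Measure α} {g : α → E} {p : ℝ}
    (hg : AEStronglyMeasurable g μ) (hint : Integrable (fun x => ‖g x‖ ^ p) μ) :
    MemLp g (ENNReal.ofReal p) μ := by
  rcases le_or_gt p 0 with hp | hp
  -- `ENNReal.ofReal` sends a nonpositive exponent to `0`, where `MemLp` is just measurability.
  · rw [ENNReal.ofReal_eq_zero.mpr hp]
    exact memLp_zero_iff_aestronglyMeasurable.mpr hg
  · rw [← integrable_norm_rpow_iff hg (by simpa using hp) ENNReal.ofReal_ne_top,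
      ENNReal.toReal_ofReal hp.le]
    exact hint

theorem measurable_finConf_prod {M R : Type*} [MeasurableSpace M] [CommMonoid R]
    [MeasurableSpace R] [MeasurableMul₂ R] {g : M → R} (hg : Measurable g) :
    Measurable fun γ : FinConf M => ∏ k, g (γ.2 k) :=
  measurable_sigma_iff.mpr fun n =>
    Finset.measurable_prod (f := fun k (x : Fin n → M) => g (x k)) Finset.univ
      fun k _ => hg.comp (measurable_pi_apply k)

section LebesguePoisson

variable {M : Type*} [MeasurableSpace M] (μ : Measure M) [SigmaFinite μ]

theorem lintegral_lebesguePoisson {F : FinConf M → ℝ≥0∞} (hF : Measurable F) :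
    ∫⁻ γ, F γ ∂(lebesguePoisson μ) =
      ∑' n, (n ! : ℝ≥0∞)⁻¹ * ∫⁻ x : Fin n → M, F ⟨n, x⟩ ∂(Measure.pi fun _ => μ) := by
  rw [lebesguePoisson, lintegral_sum_measure]
  refine tsum_congr fun n => ?_
  rw [lintegral_smul_measure, lintegral_map hF (measurable_sigmaMk n), smul_eq_mul]

theorem lintegral_lebesguePoisson_prod {g : M → ℝ≥0∞} (hg : Measurable g) :
    ∫⁻ γ, ∏ k, g (γ.2 k) ∂(lebesguePoisson μ) = ∑' n, (∫⁻ x, g x ∂μ) ^ n / n ! := by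
  rw [lintegral_lebesguePoisson μ (measurable_finConf_prod hg)]
  refine tsum_congr fun n => ?_
  rw [lintegral_fin_nat_prod_eq_prod fun _ => hg, Finset.prod_const, Finset.card_fin,
    ENNReal.div_eq_inv_mul]

end LebesguePoisson

section CoherentState

variable {M : Type*} {f : M → ℂ}

theorem measurable_coherentState [MeasurableSpace M] (hf : Measurable f) :
    Measurable (coherentState f) :=
  measurable_finConf_prod hf

-- Through `ENNReal.ofReal` rather than `‖·‖ₑ ^ p`, which differs at `0` when `p < 0`.
theorem ofReal_norm_coherentState_rpow (p : ℝ) (γ : FinConf M) :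
    ENNReal.ofReal (‖coherentState f γ‖ ^ p) = ∏ k, ENNReal.ofReal (‖f (γ.2 k)‖ ^ p) := by
  rw [coherentState, norm_prod, ← Real.finsetProd_rpow _ _ fun _ _ => norm_nonneg _,
    ENNReal.ofReal_prod_of_nonneg fun _ _ => by positivity]

variable [MeasurableSpace M] (μ : Measure M) [SigmaFinite μ] {p : ℝ}

theorem lintegral_ofReal_norm_coherentState_rpow (hf : Measurable f)
    (hfint : Integrable (fun x => ‖f x‖ ^ p) μ) :
    ∫⁻ γ, ENNReal.ofReal (‖coherentState f γ‖ ^ p) ∂(lebesguePoisson μ) =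
      ENNReal.ofReal (Real.exp (∫ x, ‖f x‖ ^ p ∂μ)) := by
  have hg : Measurable fun x => ENNReal.ofReal (‖f x‖ ^ p) :=
    ENNReal.measurable_ofReal.comp (hf.norm.pow_const p)
  simp_rw [ofReal_norm_coherentState_rpow, lintegral_lebesguePoisson_prod μ hg,
    ← ofReal_integral_eq_lintegral_ofReal hfint (ae_of_all _ fun _ => by positivity)]
  exact ENNReal.tsum_ofReal_pow_div_factorial (integral_nonneg fun _ => by positivity)

theorem integrable_norm_coherentState_rpow (hf : Measurable f)
    (hfint : Integrable (fun x => ‖f x‖ ^ p) μ) :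
    Integrable (fun γ => ‖coherentState f γ‖ ^ p) (lebesguePoisson μ) := by
  refine ⟨((measurable_coherentState hf).norm.pow_const p).aestronglyMeasurable, ?_⟩
  rw [hasFiniteIntegral_iff_ofReal (ae_of_all _ fun _ => by positivity),
    lintegral_ofReal_norm_coherentState_rpow μ hf hfint]
  exact ENNReal.ofReal_lt_top

end CoherentState

theorem coherentState_memLp_lebesguePoisson_general
    {M : Type*} [MeasurableSpace M] (μ : Measure M) [SigmaFinite μ]
    (p : ℝ)
    (f : M → ℂ) (hf : Measurable f) (hfint : Integrable (fun x => ‖f x‖ ^ p) μ) :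
    MemLp (coherentState f) (ENNReal.ofReal p) (lebesguePoisson μ) ∧
      ∫ γ, ‖coherentState f γ‖ ^ p ∂(lebesguePoisson μ) =
        Real.exp (∫ x, ‖f x‖ ^ p ∂μ) := by
  have hint := integrable_norm_coherentState_rpow μ hf hfint
  refine ⟨memLp_ofReal_of_integrable_norm_rpow
    (measurable_coherentState hf).aestronglyMeasurable hint, ?_⟩
  rw [integral_eq_lintegral_of_nonneg_ae (ae_of_all _ fun _ => by positivity)
      hint.aestronglyMeasurable, lintegral_ofReal_norm_coherentState_rpow μ hf hfint,
    ENNReal.toReal_ofReal (Real.exp_nonneg _)]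

/-- For `p ≥ 1` and `f` with `∫ |f|^p dμ < ∞`, the coherent state `e_λ(f)` belongs to
`L^p(λ_μ)` and `‖e_λ(f)‖_{L^p(λ_μ)}^p = exp(‖f‖_{L^p(μ)}^p)`. -/
theorem coherentState_memLp_lebesguePoisson
    {M : Type*} [MeasurableSpace M] (μ : Measure M) [SigmaFinite μ]
    (p : ℝ) (hp : 1 ≤ p)
    (f : M → ℂ) (hf : Measurable f) (hfint : Integrable (fun x => ‖f x‖ ^ p) μ) :
    MemLp (coherentState f) (ENNReal.ofReal p) (lebesguePoisson μ) ∧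
      ∫ γ, ‖coherentState f γ‖ ^ p ∂(lebesguePoisson μ) =
        Real.exp (∫ x, ‖f x‖ ^ p ∂μ) :=
  coherentState_memLp_lebesguePoisson_general μ p f hf hfint
end
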